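/- arXiv:2401.03339 — 4 statements merged into one kernel-verified Lean document; each statement's English description precedes it below -/
import Mathlib

section
/- There exists a C² curve γ₂ : [0,1] → ℝ² such that for γ₁(t) = (t, 0), the function f(t₁,t₂) = ‖γ₁(t₁) − γ₂(t₂)‖₂² has infinitely many critical points in [0,1]². Specifically, γ₂(t) = (t, t⁵ sin(1/t) + α) for t ≠ 0 and γ₂(0) = (0, α) works, for any fixed α ∈ ℝ. -/
/-!
The functions `t ↦ t ^ k * sin (t⁻¹ + θ)` form a family closed under differentiation: away from
`0` the derivative of the `k`-th one is `k` times the `(k-1)`-st minus the `(k-2)`-nd with phase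
`θ + π / 2`, and at `0` it vanishes as soon as `k ≥ 2`. Hence the `k`-th function is `Cⁿ` for
`k ≥ 2n + 1`, and `g t = t⁵ sin (1/t)` is `C²`. At `t = 1/(nπ)` we get `g' t = -t³ (-1)ⁿ`, so `g'`
changes sign between consecutive such points and has a zero `zₙ` in each gap. For the graph
`γ₂ t = (t, g t + α)` every `(zₙ, zₙ)` is a critical point of the squared distance.
-/

open Real Set Filter

/-- Since `0⁻¹ = 0` in Lean, `oscSin θ k 0 = 0` for `k ≠ 0` without a separate case at `0`. -/
noncomputable def oscSin (θ : ℝ) (k : ℕ) (t : ℝ) : ℝ := t ^ k * sin (t⁻¹ + θ)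

section oscSin

variable (θ : ℝ)

@[simp] lemma oscSin_apply_zero {k : ℕ} (hk : k ≠ 0) : oscSin θ k 0 = 0 := by
  simp [oscSin, hk]

lemma continuous_oscSin {k : ℕ} (hk : k ≠ 0) : Continuous (oscSin θ k) := by
  refine continuous_iff_continuousAt.2 fun t => ?_
  rcases eq_or_ne t 0 with rfl | ht
  · rw [ContinuousAt, oscSin_apply_zero θ hk]
    refine ((continuous_pow k).tendsto' 0 0 (zero_pow hk)).zero_mul_isBoundedUnder_le ?_
    exact isBoundedUnder_of ⟨1, fun s => by simpa using abs_sin_le_one (s⁻¹ + θ)⟩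
  · unfold oscSin
    fun_prop (disch := assumption)

lemma hasDerivAt_oscSin_zero (k : ℕ) : HasDerivAt (oscSin θ (k + 2)) 0 0 := by
  have hslope (t : ℝ) :
      t⁻¹ • (oscSin θ (k + 2) (0 + t) - oscSin θ (k + 2) 0) = oscSin θ (k + 1) t := by
    rcases eq_or_ne t 0 with rfl | ht
    · simp [oscSin]
    · simp only [oscSin, zero_add, smul_eq_mul]
      field_simp
      ring
  refine hasDerivAt_iff_tendsto_slope_zero.2 ?_
  simp only [hslope]
  simpa using ((continuous_oscSin θ k.succ_ne_zero).tendsto 0).mono_left nhdsWithin_le_nhds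

lemma hasDerivAt_oscSin_of_ne_zero (k : ℕ) {t : ℝ} (ht : t ≠ 0) :
    HasDerivAt (oscSin θ (k + 2)) ((k + 2) * oscSin θ (k + 1) t - oscSin (θ + π / 2) k t) t := by
  have hinv : HasDerivAt (fun s : ℝ => s⁻¹ + θ) (-(t ^ 2)⁻¹) t := (hasDerivAt_inv ht).add_const θ
  refine ((hasDerivAt_pow (k + 2) t).mul hinv.sin).congr_deriv ?_
  simp only [oscSin, ← add_assoc, sin_add_pi_div_two]
  field_simp
  push_cast
  ring

lemma hasDerivAt_oscSin (k : ℕ) (t : ℝ) :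
    HasDerivAt (oscSin θ (k + 3))
      ((k + 3) * oscSin θ (k + 2) t - oscSin (θ + π / 2) (k + 1) t) t := by
  rcases eq_or_ne t 0 with rfl | ht
  · simpa using hasDerivAt_oscSin_zero θ (k + 1)
  · exact_mod_cast hasDerivAt_oscSin_of_ne_zero θ (k + 1) ht

theorem contDiff_oscSin {n k : ℕ} (hk : 2 * n + 1 ≤ k) : ContDiff ℝ n (oscSin θ k) := by
  induction n generalizing θ k with
  | zero => exact contDiff_zero.2 (continuous_oscSin θ (by omega))
  | succ n ih =>
    obtain ⟨j, rfl⟩ : ∃ j, k = j + 3 := ⟨k - 3, by omega⟩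
    have hderiv : deriv (oscSin θ (j + 3)) =
        fun t => (j + 3) * oscSin θ (j + 2) t - oscSin (θ + π / 2) (j + 1) t :=
      funext fun t => (hasDerivAt_oscSin θ j t).deriv
    push_cast
    refine contDiff_succ_iff_deriv.2
      ⟨fun t => (hasDerivAt_oscSin θ j t).differentiableAt, by simp, ?_⟩
    rw [hderiv]
    exact (contDiff_const.mul (ih θ (by omega))).sub (ih (θ + π / 2) (by omega))

lemma oscSin_inv_nat_mul_pi (k n : ℕ) :
    oscSin θ k (n * π)⁻¹ = ((n * π)⁻¹) ^ k * ((-1) ^ n * sin θ) := by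
  rw [oscSin, inv_inv, add_comm, sin_add_nat_mul_pi]

end oscSin

lemma exists_mem_Ioo_eq_zero_of_mul_neg {f : ℝ → ℝ} {a b : ℝ} (hab : a ≤ b)
    (hf : ContinuousOn f (Icc a b)) (h : f a * f b < 0) : ∃ c ∈ Ioo a b, f c = 0 := by
  rcases lt_or_gt_of_ne (left_ne_zero_of_mul h.ne) with ha | ha
  · exact intermediate_value_Ioo hab hf ⟨ha, by nlinarith⟩
  · exact intermediate_value_Ioo' hab hf ⟨by nlinarith, ha⟩

lemma infinite_setOf_eq_zero_of_sign_change {f : ℝ → ℝ} (hf : Continuous f) {a : ℕ → ℝ}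
    (ha : StrictAnti a) (ha_pos : ∀ n, 0 < a n) (hsign : ∀ n, f (a (n + 1)) * f (a n) < 0) :
    {t ∈ Icc 0 (a 0) | f t = 0}.Infinite := by
  choose z hz hz_zero using fun n =>
    exists_mem_Ioo_eq_zero_of_mul_neg (ha n.lt_succ_self).le hf.continuousOn (hsign n)
  have hz_anti : StrictAnti z := strictAnti_nat_of_succ_lt fun n => (hz (n + 1)).2.trans (hz n).1
  refine Set.infinite_of_injective_forall_mem hz_anti.injective fun n => ⟨⟨?_, ?_⟩, hz_zero n⟩
  · exact (ha_pos (n + 1)).le.trans (hz n).1.le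
  · exact (hz n).2.le.trans (ha.antitone n.zero_le)

lemma hasDerivAt_oscSin_five (t : ℝ) :
    HasDerivAt (oscSin 0 5) (5 * oscSin 0 4 t - oscSin (π / 2) 3 t) t := by
  convert hasDerivAt_oscSin 0 2 t using 2 <;> norm_num

lemma infinite_setOf_hasDerivAt_oscSin_five_zero :
    {t ∈ Icc (0 : ℝ) 1 | HasDerivAt (oscSin 0 5) 0 t}.Infinite := by
  set f := fun t => 5 * oscSin 0 4 t - oscSin (π / 2) 3 t
  set a := fun n : ℕ => (((n + 1 : ℕ) : ℝ) * π)⁻¹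
  have ha_pos (n : ℕ) : 0 < a n := by positivity
  have ha : StrictAnti a := strictAnti_nat_of_succ_lt fun n => by
    rw [inv_lt_inv₀ (by positivity) (by positivity)]
    push_cast
    nlinarith [pi_pos]
  have hf : Continuous f :=
    (continuous_const.mul (continuous_oscSin 0 (by norm_num))).sub
      (continuous_oscSin _ (by norm_num))
  have hf_a (n : ℕ) : f (a n) = a n ^ 3 * (-1) ^ n := by
    simp only [f, a, oscSin_inv_nat_mul_pi, sin_zero, sin_pi_div_two]
    ring
  have hsign (n : ℕ) : f (a (n + 1)) * f (a n) < 0 := by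
    have hsq : ((-1 : ℝ) ^ n) ^ 2 = 1 := by rw [← pow_mul, pow_mul', neg_one_sq, one_pow]
    have hprod := mul_pos (ha_pos (n + 1)) (ha_pos n)
    calc f (a (n + 1)) * f (a n) = -(a (n + 1) * a n) ^ 3 * ((-1) ^ n) ^ 2 := by
          rw [hf_a, hf_a]; ring
      _ < 0 := by rw [hsq]; nlinarith [pow_pos hprod 3]
  refine (infinite_setOf_eq_zero_of_sign_change hf ha ha_pos hsign).mono ?_
  rintro t ⟨⟨ht0, hta⟩, hft⟩
  refine ⟨⟨ht0, hta.trans ?_⟩, (hasDerivAt_oscSin_five t).congr_deriv hft⟩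
  simpa [a] using inv_le_one_of_one_le₀ (by linarith [pi_gt_three])

lemma hasDerivAt_sqDist_graph_diag {γ : ℝ → ℝ × ℝ} (hγ : ∀ s, (γ s).1 = s) {z : ℝ}
    (hz : HasDerivAt (fun s => (γ s).2) 0 z) :
    HasDerivAt (fun s => (s - (γ z).1) ^ 2 + (0 - (γ z).2) ^ 2) 0 z ∧
      HasDerivAt (fun s => (z - (γ s).1) ^ 2 + (0 - (γ s).2) ^ 2) 0 z := by
  simp only [hγ]
  constructor
  · refine ((((hasDerivAt_id z).sub_const z).pow 2).add_const _).congr_deriv ?_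
    simp
  · refine ((((hasDerivAt_id z).const_sub z).pow 2).add ((hz.const_sub 0).pow 2)).congr_deriv ?_
    simp

/-- There is a `C²` curve `γ₂` in `ℝ²` (namely `t ↦ (t, t⁵ sin(1/t) + α)`, extended by
`(0,α)` at `t = 0`) such that for `γ₁ t = (t,0)`, the squared-distance function
`f(t₁,t₂) = ‖γ₁ t₁ − γ₂ t₂‖₂²` has infinitely many critical points in `[0,1]²`. -/
theorem stmt_7 (α : ℝ) :
    ∃ γ₂ : ℝ → ℝ × ℝ,
      ContDiffOn ℝ 2 γ₂ (Set.Icc 0 1) ∧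
      (∀ t : ℝ, t ≠ 0 → γ₂ t = (t, t ^ 5 * Real.sin (1 / t) + α)) ∧
      γ₂ 0 = (0, α) ∧
      {p : ℝ × ℝ | p ∈ Set.Icc (0:ℝ) 1 ×ˢ Set.Icc (0:ℝ) 1 ∧
        HasDerivAt (fun s => (s - (γ₂ p.2).1) ^ 2 + (0 - (γ₂ p.2).2) ^ 2) 0 p.1 ∧
        HasDerivAt (fun s => (p.1 - (γ₂ s).1) ^ 2 + (0 - (γ₂ s).2) ^ 2) 0 p.2}.Infinite := by
  set γ₂ : ℝ → ℝ × ℝ := fun t => (t, oscSin 0 5 t + α)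
  refine ⟨γ₂, ?_, fun t _ => by simp [γ₂, oscSin, one_div], by simp [γ₂], ?_⟩
  · exact (contDiff_id.prodMk ((contDiff_oscSin 0 (by norm_num)).add contDiff_const)).contDiffOn
  refine (infinite_setOf_hasDerivAt_oscSin_five_zero.image
    fun s _ t _ (hst : (s, s) = (t, t)) => congrArg Prod.fst hst).mono ?_
  rintro _ ⟨z, ⟨hz, hz_crit⟩, rfl⟩
  exact ⟨⟨hz, hz⟩, hasDerivAt_sqDist_graph_diag (fun _ => rfl) (hz_crit.add_const α)⟩
end

section
/- A polynomial curve γ : ℝ → ℝ^d of componentwise degree at most k, whose squared distance to the origin is not constant, is tangent to at most 2k−1 Euclidean spheres centered at the origin; i.e., the function t ↦ ‖γ(t)‖₂² has at most 2k−1 critical points' worth of critical values, in particular finitely many. -/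
/-!
`t ↦ ‖γ t‖²` is the polynomial `P = ∑ i, pᵢ²` of degree at most `2k`. Non-constancy makes
`P'` a nonzero polynomial of degree at most `2k - 1`, so `P` has at most `2k - 1` critical
points, hence at most that many critical values.
-/

open Polynomial

def criticalValues (f : ℝ → ℝ) : Set ℝ :=
  f '' {t | deriv f t = 0}

namespace Polynomial

theorem natDegree_sum_pow_le {ι R : Type*} [CommSemiring R] {s : Finset ι} {p : ι → R[X]}
    {k : ℕ} (n : ℕ) (h : ∀ i ∈ s, (p i).natDegree ≤ k) :
    (∑ i ∈ s, p i ^ n).natDegree ≤ n * k :=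
  natDegree_sum_le_of_forall_le _ _ fun i hi =>
    natDegree_pow_le.trans (Nat.mul_le_mul_left n (h i hi))

theorem derivative_ne_zero_of_eval_ne {R : Type*} [CommRing R] [IsDomain R] [CharZero R]
    {P : R[X]} {s t : R} (h : P.eval s ≠ P.eval t) : derivative P ≠ 0 := fun h0 =>
  h <| by rw [eq_C_of_derivative_eq_zero h0]; simp only [eval_C]

theorem setOf_deriv_eval_eq_zero {P : ℝ[X]} (hP : derivative P ≠ 0) :
    {t | deriv (fun t => P.eval t) t = 0} = (derivative P).roots.toFinset := by
  ext t
  simp [Polynomial.deriv, hP]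

theorem criticalValues_eval_finite {P : ℝ[X]} (hP : derivative P ≠ 0) :
    (criticalValues fun t => P.eval t).Finite := by
  unfold criticalValues
  rw [setOf_deriv_eval_eq_zero hP]
  exact (Finset.finite_toSet _).image _

theorem ncard_criticalValues_eval_le {P : ℝ[X]} (hP : derivative P ≠ 0) :
    (criticalValues fun t => P.eval t).ncard ≤ P.natDegree - 1 := by
  unfold criticalValues
  rw [setOf_deriv_eval_eq_zero hP]
  calc _ ≤ ((derivative P).roots.toFinset : Set ℝ).ncard :=
        Set.ncard_image_le (Finset.finite_toSet _)
    _ = (derivative P).roots.toFinset.card := Set.ncard_coe_finset _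
    _ ≤ Multiset.card (derivative P).roots := Multiset.toFinset_card_le _
    _ ≤ (derivative P).natDegree := card_roots' _
    _ ≤ P.natDegree - 1 := natDegree_derivative_le P

end Polynomial

/-- A polynomial curve of componentwise degree at most `k` whose squared distance to the
origin is not constant is tangent to at most `2k − 1` spheres centered at the origin:
the function `t ↦ ‖γ t‖₂²` has at most `2k − 1` critical values (in particular finitely
many). -/
theorem stmt_10 {d k : ℕ} (p : Fin d → Polynomial ℝ)
    (hdeg : ∀ i, (p i).natDegree ≤ k)
    (hnc : ∃ s t : ℝ, ∑ i, (p i).eval s ^ 2 ≠ ∑ i, (p i).eval t ^ 2) :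
    ((fun t : ℝ => ∑ i, (p i).eval t ^ 2) ''
        {t : ℝ | deriv (fun t : ℝ => ∑ i, (p i).eval t ^ 2) t = 0}).Finite ∧
    ((fun t : ℝ => ∑ i, (p i).eval t ^ 2) ''
        {t : ℝ | deriv (fun t : ℝ => ∑ i, (p i).eval t ^ 2) t = 0}).ncard ≤ 2 * k - 1 := by
  set P : ℝ[X] := ∑ i, p i ^ 2
  have hPeval (t : ℝ) : ∑ i, (p i).eval t ^ 2 = P.eval t := by
    simp [P, eval_finsetSum]
  obtain ⟨s, t, hst⟩ := hnc
  have hP : derivative P ≠ 0 := by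
    rw [hPeval, hPeval] at hst
    exact derivative_ne_zero_of_eval_ne hst
  have hdegP : P.natDegree ≤ 2 * k := natDegree_sum_pow_le 2 fun i _ => hdeg i
  change (criticalValues _).Finite ∧ (criticalValues _).ncard ≤ _
  rw [funext hPeval]
  exact ⟨criticalValues_eval_finite hP,
    (ncard_criticalValues_eval_le hP).trans (Nat.sub_le_sub_right hdegP 1)⟩
end

section
/- Let γ : [0,1] → ℝ^d be a rectifiable curve and γ′ a curve obtained from γ by replacing a subcurve s of γ (with endpoints p₁ and p₂, where s is contained in the closed ball B(p₁, μ)) by the straight line segment from p₁ to p₂. Then the Fréchet distance between γ and γ′ is at most μ. -/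
open Set

/-- A reparametrization: an increasing continuous bijection of `[0,1]` onto itself. -/
def IsReparam (α : ℝ → ℝ) : Prop :=
  ContinuousOn α (Icc 0 1) ∧ StrictMonoOn α (Icc 0 1) ∧ BijOn α (Icc 0 1) (Icc 0 1)

/-- The Fréchet distance of two curves `γ₁ γ₂ : [0,1] → ℝ^d`. -/
noncomputable def frechetDist {d : ℕ} (γ₁ γ₂ : ℝ → EuclideanSpace ℝ (Fin d)) : ℝ :=
  sInf {r : ℝ | ∃ α β, IsReparam α ∧ IsReparam β ∧
    ∀ t ∈ Icc (0:ℝ) 1, ‖γ₁ (α t) - γ₂ (β t)‖ ≤ r}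

/-!
Let `p₁ = γ a`, `p₂ = γ b`. Reparametrize `γ` so that, while the segment moves only from `p₁`
to a point within `ε` of `p₁`, `γ` runs through all of `s` except a final piece lying within `ε`
of `p₂` (continuity at `b`); along that first phase both curves stay in `B(p₁, μ)` up to `ε`.
In the second phase `γ` stays within `ε` of `p₂` while the segment covers the rest of the way,
and every point of the segment lies within `‖p₂ - p₁‖ ≤ μ` of `p₂`. Hence `d_F ≤ μ + ε` for
every `ε > 0`. A reparametrization cannot pause, which is why the slack `ε` is needed.
-/

open Filter Topology

lemma frechetDist_le_of_forall_norm_le {d : ℕ} {γ₁ γ₂ : ℝ → EuclideanSpace ℝ (Fin d)}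
    {α β : ℝ → ℝ} {r : ℝ} (hα : IsReparam α) (hβ : IsReparam β)
    (h : ∀ t ∈ Icc (0:ℝ) 1, ‖γ₁ (α t) - γ₂ (β t)‖ ≤ r) : frechetDist γ₁ γ₂ ≤ r :=
  csInf_le ⟨0, fun _ ⟨_, _, _, _, h'⟩ => (norm_nonneg _).trans (h' 0 ⟨le_rfl, zero_le_one⟩)⟩
    ⟨α, β, hα, hβ, h⟩

lemma IsReparam.of_strictMono {α : ℝ → ℝ} (hc : Continuous α) (hm : StrictMono α)
    (h0 : α 0 = 0) (h1 : α 1 = 1) : IsReparam α := by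
  refine ⟨hc.continuousOn, hm.strictMonoOn _, ?_, hm.injective.injOn, ?_⟩
  · exact fun t ht => ⟨h0 ▸ hm.monotone ht.1, h1 ▸ hm.monotone ht.2⟩
  · have h := intermediate_value_Icc zero_le_one hc.continuousOn
    rwa [h0, h1] at h

lemma isReparam_id : IsReparam id :=
  .of_strictMono continuous_id strictMono_id rfl rfl

lemma exists_strictMono_eq_and_eqOn_compl_Ioo {a c c' b : ℝ} (hac : a < c) (hcc' : c ≤ c')
    (hc'b : c' < b) :
    ∃ φ : ℝ → ℝ, Continuous φ ∧ StrictMono φ ∧ φ c = c' ∧ ∀ t ∉ Ioo a b, φ t = t := by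
  set k₁ := (c' - a) / (c - a)
  set k₂ := (b - c') / (b - c)
  have hk₁ : 1 ≤ k₁ := (one_le_div (by linarith)).2 (by linarith)
  have hk₂ : 0 < k₂ := div_pos (by linarith) (by linarith)
  have hk₂' : k₂ ≤ 1 := (div_le_one (by linarith)).2 (by linarith)
  have hL₁c : a + k₁ * (c - a) = c' := by
    rw [div_mul_cancel₀ _ (by linarith : c - a ≠ 0)]; ring
  have hL₂c : b + k₂ * (c - b) = c' := by
    rw [show c - b = -(b - c) by ring, mul_neg, div_mul_cancel₀ _ (by linarith : b - c ≠ 0)]; ring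
  -- `φ` is the first line on `[a, c]` and the second on `[c, b]`;
  -- off `[a, b]` one of them lies below `id`.
  refine ⟨fun t => max t (min (a + k₁ * (t - a)) (b + k₂ * (t - b))), by fun_prop,
    fun x y h => max_lt_max h (min_lt_min (by gcongr) (by gcongr)), ?_, fun t ht => ?_⟩
  · simp only [hL₁c, hL₂c, min_self, max_eq_right hcc']
  · rw [mem_Ioo, not_and_or, not_lt, not_lt] at ht
    rcases ht with ht | ht <;> refine max_eq_left ?_
    · exact (min_le_left _ _).trans (by nlinarith)
    · exact (min_le_right _ _).trans (by nlinarith)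

lemma ContinuousWithinAt.exists_Icc_left_dist_le {X : Type*} [PseudoMetricSpace X]
    {f : ℝ → X} {a b ε : ℝ} (hf : ContinuousWithinAt f (Icc a b) a) (hab : a < b)
    (hε : 0 < ε) : ∃ c ∈ Ioo a b, ∀ t ∈ Icc a c, dist (f t) (f a) ≤ ε := by
  have hmem := hf (Metric.closedBall_mem_nhds _ hε)
  rw [nhdsWithin_Icc_eq_nhdsGE hab] at hmem
  obtain ⟨u, hu, hsub⟩ := mem_nhdsGE_iff_exists_Icc_subset.1 hmem
  exact ⟨min u ((a + b) / 2), ⟨lt_min hu (by linarith), (min_le_right _ _).trans_lt (by linarith)⟩,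
    fun t ht => hsub ⟨ht.1, ht.2.trans (min_le_left _ _)⟩⟩

lemma ContinuousWithinAt.exists_Icc_right_dist_le {X : Type*} [PseudoMetricSpace X]
    {f : ℝ → X} {a b ε : ℝ} (hf : ContinuousWithinAt f (Icc a b) b) (hab : a < b)
    (hε : 0 < ε) : ∃ c ∈ Ioo a b, ∀ t ∈ Icc c b, dist (f t) (f b) ≤ ε := by
  have hmem := hf (Metric.closedBall_mem_nhds _ hε)
  rw [nhdsWithin_Icc_eq_nhdsLE hab] at hmem
  obtain ⟨l, hl, hsub⟩ := mem_nhdsLE_iff_exists_Icc_subset.1 hmem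
  exact ⟨max l ((a + b) / 2), ⟨(by linarith : a < (a + b) / 2).trans_le (le_max_right _ _),
    max_lt hl (by linarith)⟩, fun t ht => hsub ⟨(le_max_left _ _).trans ht.1, ht.2⟩⟩

lemma dist_lineMap_right_le {E : Type*} [SeminormedAddCommGroup E] [NormedSpace ℝ E] (p q : E)
    {c : ℝ} (hc : c ∈ Icc (0:ℝ) 1) : dist (AffineMap.lineMap p q c) q ≤ dist p q := by
  rw [dist_lineMap_right, Real.norm_eq_abs, abs_of_nonneg (by linarith [hc.2])]
  exact mul_le_of_le_one_left dist_nonneg (by linarith [hc.1])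

lemma dist_comp_le_of_two_phase {X : Type*} [PseudoMetricSpace X] {γ γ' : ℝ → X} {φ : ℝ → ℝ}
    {a c c' b μ ε : ℝ} {p₁ p₂ : X} (hφ : Monotone φ) (hφc : φ c = c') (ha : φ a = a)
    (hb : φ b = b) (hγ₁ : ∀ t ∈ Icc a c', dist (γ t) p₁ ≤ μ)
    (hγ₂ : ∀ t ∈ Icc c' b, dist (γ t) p₂ ≤ ε) (hγ'₁ : ∀ t ∈ Icc a c, dist (γ' t) p₁ ≤ ε)
    (hγ'₂ : ∀ t ∈ Icc c b, dist (γ' t) p₂ ≤ μ) {t : ℝ} (ht : t ∈ Icc a b) :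
    dist (γ (φ t)) (γ' t) ≤ μ + ε := by
  rcases le_total t c with htc | hct
  · have hφt : φ t ∈ Icc a c' := ⟨ha ▸ hφ ht.1, hφc ▸ hφ htc⟩
    linarith [dist_triangle_right (γ (φ t)) (γ' t) p₁, hγ₁ _ hφt, hγ'₁ t ⟨ht.1, htc⟩]
  · have hφt : φ t ∈ Icc c' b := ⟨hφc ▸ hφ hct, hb ▸ hφ ht.2⟩
    linarith [dist_triangle_right (γ (φ t)) (γ' t) p₂, hγ₂ _ hφt, hγ'₂ t ⟨hct, ht.2⟩]

theorem stmt_13_general {d : ℕ} (γ γ' : ℝ → EuclideanSpace ℝ (Fin d)) (μ a b : ℝ)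
    (hμ : 0 ≤ μ) (hab : a ≤ b) (ha : a ∈ Icc (0:ℝ) 1) (hb : b ∈ Icc (0:ℝ) 1)
    (hγ : ContinuousOn γ (Icc 0 1))
    (hball : ∀ t ∈ Icc a b, γ t ∈ Metric.closedBall (γ a) μ)
    (hout : ∀ t ∈ Icc (0:ℝ) 1, t ∉ Ioo a b → γ' t = γ t)
    (hseg : ∀ t ∈ Icc a b, γ' t = γ a + ((t - a) / (b - a)) • (γ b - γ a)) :
    frechetDist γ γ' ≤ μ := by
  rcases hab.eq_or_lt with rfl | hab
  · exact (frechetDist_le_of_forall_norm_le isReparam_id isReparam_id fun t ht => by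
      simp [hout t ht fun h => (h.1.trans h.2).false]).trans hμ
  refine le_of_forall_pos_le_add fun ε hε => ?_
  have hseg' : ∀ t ∈ Icc a b, γ' t = AffineMap.lineMap (γ a) (γ b) ((t - a) / (b - a)) :=
    fun t ht => by rw [hseg t ht, AffineMap.lineMap_apply_module', add_comm]
  have hγ'b : ∀ s ∈ Icc a b, dist (γ' s) (γ b) ≤ μ := fun s hs => by
    have hs01 : (s - a) / (b - a) ∈ Icc (0:ℝ) 1 :=
      ⟨div_nonneg (by linarith [hs.1]) (by linarith),
        (div_le_one (by linarith)).2 (by linarith [hs.2])⟩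
    rw [hseg' s hs]
    exact (dist_lineMap_right_le _ _ hs01).trans
      (dist_comm (γ a) (γ b) ▸ hball b (right_mem_Icc.2 hab.le))
  have hγ'a : γ' a = γ a := hout a ha (fun h => h.1.false)
  have hγ'cont : ContinuousWithinAt γ' (Icc a b) a :=
    ((AffineMap.lineMap_continuous.comp (by fun_prop)).continuousWithinAt).congr hseg'
      (hseg' a (left_mem_Icc.2 hab.le))
  obtain ⟨c, hc, hγ'c⟩ := hγ'cont.exists_Icc_left_dist_le hab hε
  obtain ⟨c', hc', hγc'⟩ := ((hγ b hb).mono (Icc_subset_Icc (ha.1.trans hc.1.le) hb.2)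
    ).exists_Icc_right_dist_le hc.2 hε
  obtain ⟨φ, hφc, hφm, hφcc, hφout⟩ := exists_strictMono_eq_and_eqOn_compl_Ioo hc.1 hc'.1.le hc'.2
  have hφ : IsReparam φ := .of_strictMono hφc hφm (hφout 0 fun h => (h.1.trans_le ha.1).false)
    (hφout 1 fun h => (hb.2.trans_lt h.2).false)
  refine frechetDist_le_of_forall_norm_le hφ isReparam_id fun t ht => ?_
  rw [← dist_eq_norm, id_eq]
  by_cases htab : t ∈ Ioo a b
  · exact dist_comp_le_of_two_phase hφm.monotone hφcc (hφout a fun h => h.1.false)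
      (hφout b fun h => h.2.false) (fun s hs => hball s ⟨hs.1, hs.2.trans hc'.2.le⟩) hγc'
      (hγ'a ▸ hγ'c) (fun s hs => hγ'b s ⟨hc.1.le.trans hs.1, hs.2⟩) (Ioo_subset_Icc_self htab)
  · rw [hφout t htab, hout t ht htab, dist_self]
    positivity

/-- Replacing a subcurve `γ|[a,b]` of a rectifiable curve `γ` that is contained in the
closed ball `B(γ a, μ)` by the straight segment from `γ a` to `γ b` changes the curve by
Fréchet distance at most `μ`. -/
theorem stmt_13 {d : ℕ} (γ γ' : ℝ → EuclideanSpace ℝ (Fin d)) (μ a b : ℝ)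
    (hμ : 0 ≤ μ) (hab : a ≤ b) (ha : a ∈ Icc (0:ℝ) 1) (hb : b ∈ Icc (0:ℝ) 1)
    (hγ : ContinuousOn γ (Icc 0 1))
    (hrect : eVariationOn γ (Icc 0 1) ≠ ⊤)
    (hball : ∀ t ∈ Icc a b, γ t ∈ Metric.closedBall (γ a) μ)
    (hout : ∀ t ∈ Icc (0:ℝ) 1, t ∉ Ioo a b → γ' t = γ t)
    (hseg : ∀ t ∈ Icc a b, γ' t = γ a + ((t - a) / (b - a)) • (γ b - γ a)) :
    frechetDist γ γ' ≤ μ :=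
  stmt_13_general γ γ' μ a b hμ hab ha hb hγ hball hout hseg
end

section
/- If a piece u₂ of a curve comes within distance δ of a piece u₁ (i.e., there exist p₁ ∈ u₁, p₂ ∈ u₂ with ‖p₁−p₂‖ ≤ δ), l(u₂) ≥ l(u₁), and p_m is the midpoint (in arc length) of u₁, then the arc length of u₂ inside the closed ball B(p_m, (3/2)·l(u₁) + δ) is at least l(u₁). -/
open Set Metric

/-!
Every point of `u₁` is within `l₁/2` of the midpoint `p_m` (each half of `u₁` has length
`l₁/2`), so the point `u₂ t₀` close to `u₁` lies within `l₁/2 + δ` of `p_m`, and the ball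
`B(u₂ t₀, l₁)` lies inside `B(p_m, (3/2)·l₁ + δ)`. It remains to see that `u₂` has length at
least `l₁` inside `B(u₂ t₀, l₁)`: either `u₂` never leaves this ball, or by the intermediate
value theorem it reaches its boundary sphere, and the chord from `u₂ t₀` to that point already
has length `l₁`.
-/

theorem edist_le_eVariationOn_div_two_of_midpoint {E : Type*} [PseudoEMetricSpace E]
    {u : ℝ → E} {a b tm s : ℝ} (htm : tm ∈ Icc a b)
    (hmid : eVariationOn u (Icc a tm) = eVariationOn u (Icc tm b)) (hs : s ∈ Icc a b) :
    edist (u s) (u tm) ≤ eVariationOn u (Icc a b) / 2 := by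
  have hsplit :
      eVariationOn u (Icc a tm) + eVariationOn u (Icc tm b) = eVariationOn u (Icc a b) := by
    simpa using eVariationOn.Icc_add_Icc u (s := univ) htm.1 htm.2 (mem_univ _)
  have hhalf : eVariationOn u (Icc a tm) ≤ eVariationOn u (Icc a b) / 2 := by
    rw [← hsplit, ← hmid, ← mul_two,
      ENNReal.mul_div_cancel_right two_ne_zero ENNReal.ofNat_ne_top]
  rcases le_total s tm with h | h
  · exact (eVariationOn.edist_le u (s := Icc a tm) ⟨hs.1, h⟩ ⟨htm.1, le_rfl⟩).trans hhalf
  · exact (eVariationOn.edist_le u (s := Icc tm b) ⟨h, hs.2⟩ ⟨le_rfl, htm.2⟩).trans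
      (hmid ▸ hhalf)

theorem ofReal_le_eVariationOn_preimage_closedBall {X : Type*} [PseudoMetricSpace X]
    {u : ℝ → X} {a b t₀ r : ℝ} (hu : ContinuousOn u (Icc a b)) (ht₀ : t₀ ∈ Icc a b)
    (hr : 0 ≤ r) (hlen : ENNReal.ofReal r ≤ eVariationOn u (Icc a b)) :
    ENNReal.ofReal r ≤ eVariationOn u {t ∈ Icc a b | u t ∈ closedBall (u t₀) r} := by
  set S := {t ∈ Icc a b | u t ∈ closedBall (u t₀) r}
  by_cases hexit : ∃ t ∈ Icc a b, r ≤ dist (u t) (u t₀)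
  · obtain ⟨t, ht, hrt⟩ := hexit
    have hsub : uIcc t₀ t ⊆ Icc a b := uIcc_subset_Icc ht₀ ht
    obtain ⟨e, he, hre : dist (u e) (u t₀) = r⟩ :
        r ∈ (fun s => dist (u s) (u t₀)) '' uIcc t₀ t :=
      intermediate_value_uIcc
        ((continuous_id.dist continuous_const).comp_continuousOn (hu.mono hsub))
        (by simp [hr, hrt])
    calc ENNReal.ofReal r = edist (u e) (u t₀) := by rw [edist_dist, hre]
      _ ≤ eVariationOn u S := eVariationOn.edist_le u ⟨hsub he, hre.le⟩ ⟨ht₀, by simp [hr]⟩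
  · push Not at hexit
    have hS : S = Icc a b := sep_eq_self_iff_mem_true.2 fun t ht => mem_closedBall.2 (hexit t ht).le
    rwa [hS]

theorem stmt_18_general {d : ℕ} (u₁ u₂ : ℝ → EuclideanSpace ℝ (Fin d)) (δ l₁ : ℝ)
    (hl₁ : 0 < l₁)
    (h₂cont : ContinuousOn u₂ (Icc 0 1))
    (hlen1 : eVariationOn u₁ (Icc 0 1) = ENNReal.ofReal l₁)
    (hlen2 : ENNReal.ofReal l₁ ≤ eVariationOn u₂ (Icc 0 1))
    (tm : ℝ) (htm : tm ∈ Icc (0:ℝ) 1)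
    (hmid : eVariationOn u₁ (Icc 0 tm) = eVariationOn u₁ (Icc tm 1))
    (hclose : ∃ s ∈ Icc (0:ℝ) 1, ∃ t ∈ Icc (0:ℝ) 1, ‖u₁ s - u₂ t‖ ≤ δ) :
    ENNReal.ofReal l₁ ≤
      eVariationOn u₂
        {t ∈ Icc (0:ℝ) 1 | u₂ t ∈ Metric.closedBall (u₁ tm) (3 / 2 * l₁ + δ)} := by
  obtain ⟨s₀, hs₀, t₀, ht₀, hst⟩ := hclose
  have hs₀m : dist (u₁ s₀) (u₁ tm) ≤ l₁ / 2 := by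
    have hhalf : ENNReal.ofReal l₁ / 2 = ENNReal.ofReal (l₁ / 2) := by
      rw [ENNReal.ofReal_div_of_pos two_pos, ENNReal.ofReal_ofNat]
    have := edist_le_eVariationOn_div_two_of_midpoint htm hmid hs₀
    rwa [hlen1, hhalf, edist_le_ofReal (by positivity)] at this
  have hball : closedBall (u₂ t₀) l₁ ⊆ closedBall (u₁ tm) (3 / 2 * l₁ + δ) := by
    refine closedBall_subset_closedBall' ?_
    have ht₀s₀ : dist (u₂ t₀) (u₁ s₀) ≤ δ := by rwa [dist_comm, dist_eq_norm]
    linarith [dist_triangle (u₂ t₀) (u₁ s₀) (u₁ tm)]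
  calc ENNReal.ofReal l₁
      ≤ eVariationOn u₂ {t ∈ Icc (0:ℝ) 1 | u₂ t ∈ closedBall (u₂ t₀) l₁} :=
        ofReal_le_eVariationOn_preimage_closedBall h₂cont ht₀ hl₁.le hlen2
    _ ≤ _ := eVariationOn.mono u₂ <| by intro t ht; exact ⟨ht.1, hball ht.2⟩

/-- If a piece `u₂` comes within distance `δ` of a piece `u₁`, `l(u₂) ≥ l(u₁) = l₁`, and
`p_m = u₁ t_m` is the arc-length midpoint of `u₁`, then the arc length of `u₂` inside the
closed ball `B(p_m, (3/2)·l₁ + δ)` is at least `l₁`. -/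
theorem stmt_18 {d : ℕ} (u₁ u₂ : ℝ → EuclideanSpace ℝ (Fin d)) (δ l₁ : ℝ)
    (hδ : 0 < δ) (hl₁ : 0 < l₁)
    (h₁cont : ContinuousOn u₁ (Icc 0 1)) (h₂cont : ContinuousOn u₂ (Icc 0 1))
    (hlen1 : eVariationOn u₁ (Icc 0 1) = ENNReal.ofReal l₁)
    (hlen2 : ENNReal.ofReal l₁ ≤ eVariationOn u₂ (Icc 0 1))
    (tm : ℝ) (htm : tm ∈ Icc (0:ℝ) 1)
    (hmid : eVariationOn u₁ (Icc 0 tm) = eVariationOn u₁ (Icc tm 1))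
    (hclose : ∃ s ∈ Icc (0:ℝ) 1, ∃ t ∈ Icc (0:ℝ) 1, ‖u₁ s - u₂ t‖ ≤ δ) :
    ENNReal.ofReal l₁ ≤
      eVariationOn u₂
        {t ∈ Icc (0:ℝ) 1 | u₂ t ∈ Metric.closedBall (u₁ tm) (3 / 2 * l₁ + δ)} :=
  stmt_18_general u₁ u₂ δ l₁ hl₁ h₂cont hlen1 hlen2 tm htm hmid hclose
end
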